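/- arXiv:1509.08932 — 2 statements merged into one kernel-verified Lean document; each statement's English description precedes it below -/
import Mathlib

section
/- Let X be a finite set, U a finite nonempty set of actions with admissible action sets U(x) ⊆ U nonempty for each x, P(·|x,u) a sub-probability kernel on X, D : X × U → ℝ bounded, and B : X → ℝ. Suppose there exist a positive weight function ξ : X → ℝ_{>0} and β ∈ (0,1) such that Σ_{x'} P(x'|x,u) ξ(x') ≤ β ξ(x) for all x, u. Then the operator T[V](x) = min_{u ∈ U(x)} max{B(x), D(x,u) + Σ_{x'} P(x'|x,u) V(x')} is a β-contraction in the weighted sup-norm ‖V‖_ξ = max_x |V(x)|/ξ(x): ‖T[V₁] − T[V₂]‖_ξ ≤ β ‖V₁ − V₂‖_ξ. -/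
open Finset

lemma inf'_le_inf'_add {U : Type*} {s : Finset U} (hs : s.Nonempty)
    (f g : U → ℝ) (c : ℝ) (h : ∀ u ∈ s, f u ≤ g u + c) :
    s.inf' hs f ≤ s.inf' hs g + c := by
  obtain ⟨u0, hu0, hval⟩ := s.exists_mem_eq_inf' hs g
  calc s.inf' hs f ≤ f u0 := Finset.inf'_le _ hu0
    _ ≤ g u0 + c := h u0 hu0
    _ = s.inf' hs g + c := by rw [hval]

/-- Weighted sup-norm β-contraction of the max-projected Bellman operator
`T[V](x) = min_{u ∈ U(x)} max {B x, D x u + Σ_{x'} P x u x' * V x'}`. -/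
theorem bellman_operator_contraction
    {X U : Type*} [Fintype X] [Nonempty X] [Fintype U] [DecidableEq U]
    (Uadm : X → Finset U) (hUadm : ∀ x, (Uadm x).Nonempty)
    (P : X → U → X → ℝ) (hP : ∀ x u x', 0 ≤ P x u x')
    (D : X → U → ℝ) (B : X → ℝ)
    (ξ : X → ℝ) (hξ : ∀ x, 0 < ξ x) (β : ℝ) (hβ0 : 0 < β) (hβ1 : β < 1)
    (hdisc : ∀ x u, ∑ x', P x u x' * ξ x' ≤ β * ξ x)
    (T : (X → ℝ) → (X → ℝ))
    (hT : ∀ V x, T V x =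
      (Uadm x).inf' (hUadm x) (fun u => max (B x) (D x u + ∑ x', P x u x' * V x')))
    (V₁ V₂ : X → ℝ) :
    Finset.univ.sup' Finset.univ_nonempty (fun x => |T V₁ x - T V₂ x| / ξ x)
      ≤ β * Finset.univ.sup' Finset.univ_nonempty (fun x => |V₁ x - V₂ x| / ξ x) := by
  set M := Finset.univ.sup' Finset.univ_nonempty (fun x => |V₁ x - V₂ x| / ξ x) with hM
  have hMb : ∀ x', |V₁ x' - V₂ x'| ≤ M * ξ x' := by
    intro x'
    have := Finset.le_sup' (fun x => |V₁ x - V₂ x| / ξ x) (Finset.mem_univ x')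
    rw [div_le_iff₀ (hξ x')] at this
    simpa [hM] using this
  -- key pointwise bound
  have key : ∀ (W₁ W₂ : X → ℝ), (∀ x', |W₁ x' - W₂ x'| ≤ M * ξ x') →
      ∀ x, T W₁ x ≤ T W₂ x + β * (M * ξ x) := by
    intro W₁ W₂ hW x
    rw [hT, hT]
    apply inf'_le_inf'_add
    intro u _
    have hsum : ∑ x', P x u x' * W₁ x' ≤ (∑ x', P x u x' * W₂ x') + β * (M * ξ x) := by
      have h1 : ∑ x', P x u x' * W₁ x' - ∑ x', P x u x' * W₂ x'
          = ∑ x', P x u x' * (W₁ x' - W₂ x') := by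
        rw [← Finset.sum_sub_distrib]; congr 1; ext x'; ring
      have h2 : ∑ x', P x u x' * (W₁ x' - W₂ x') ≤ ∑ x', P x u x' * (M * ξ x') := by
        apply Finset.sum_le_sum
        intro x' _
        exact mul_le_mul_of_nonneg_left
          ((le_abs_self _).trans (hW x')) (hP x u x')
      have h3 : ∑ x', P x u x' * (M * ξ x') ≤ β * (M * ξ x) := by
        have hM0 : 0 ≤ M := by
          have := hMb (Classical.arbitrary X)
          nlinarith [abs_nonneg (V₁ (Classical.arbitrary X) - V₂ (Classical.arbitrary X)),
            hξ (Classical.arbitrary X)]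
        calc ∑ x', P x u x' * (M * ξ x') = M * ∑ x', P x u x' * ξ x' := by
              rw [Finset.mul_sum]; congr 1; ext x'; ring
          _ ≤ M * (β * ξ x) := mul_le_mul_of_nonneg_left (hdisc x u) hM0
          _ = β * (M * ξ x) := by ring
      linarith
    calc max (B x) (D x u + ∑ x', P x u x' * W₁ x')
        ≤ max (B x) (D x u + ((∑ x', P x u x' * W₂ x') + β * (M * ξ x))) :=
          max_le_max le_rfl (by linarith)
      _ ≤ max (B x) (D x u + ∑ x', P x u x' * W₂ x') + β * (M * ξ x) := by
          have hc : 0 ≤ β * (M * ξ x) := by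
            have hM0 : 0 ≤ M := by
              have := hMb (Classical.arbitrary X)
              nlinarith [abs_nonneg (V₁ (Classical.arbitrary X) - V₂ (Classical.arbitrary X)),
                hξ (Classical.arbitrary X)]
            exact mul_nonneg hβ0.le (mul_nonneg hM0 (hξ x).le)
          rw [max_le_iff]
          constructor
          · linarith [le_max_left (B x) (D x u + ∑ x', P x u x' * W₂ x')]
          · linarith [le_max_right (B x) (D x u + ∑ x', P x u x' * W₂ x')]
  apply Finset.sup'_le
  intro x _
  rw [div_le_iff₀ (hξ x)]
  have h12 := key V₁ V₂ hMb x
  have h21 := key V₂ V₁ (fun x' => by rw [abs_sub_comm]; exact hMb x') x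
  rw [abs_le]
  constructor <;> [linarith; linarith]
end

section
/- Under the same hypotheses (finite state space X, admissible actions U(x), sub-probability kernel P, bounded D, function B, weight ξ > 0 with Σ_{x'} P(x'|x,u)ξ(x') ≤ β ξ(x) for β ∈ (0,1)), the operator T[V](x) = min_{u ∈ U(x)} max{B(x), D(x,u) + Σ_{x'} P(x'|x,u)V(x')} has a unique fixed point V* : X → ℝ, and for any initial V₀ the iterates V_{k+1} = T[V_k] converge to V*. -/
/-!
Rescaling by the weight, `W ↦ W * ξ`, turns the weighted sup-norm `max_x |V x| / ξ x` into the
ordinary sup-norm on `X → ℝ`. Because `P` is nonnegative, the Bellman operator moves every value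
by at most `(∑ x', P x u x' * ξ x') * c ≤ β * ξ x * c` when its argument moves by at most
`c * ξ` pointwise, and neither `max (B x)` nor the minimum over `u` can enlarge this. So the
rescaled operator is a `β`-contraction of a complete space, and Banach's fixed point theorem
applies; undoing the rescaling gives the fixed point of the Bellman operator and the convergence
of value iteration.
-/

open Finset Filter Topology

theorem Finset.inf'_sub_inf'_le {ι α : Type*} [AddCommGroup α] [LinearOrder α]
    [IsOrderedAddMonoid α] {s : Finset ι} (hs : s.Nonempty) {f g : ι → α} {c : α}
    (h : ∀ i ∈ s, f i - g i ≤ c) : s.inf' hs f - s.inf' hs g ≤ c := by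
  obtain ⟨i, hi, hgi⟩ := s.exists_mem_eq_inf' hs g
  rw [hgi, sub_le_iff_le_add]
  exact (s.inf'_le f hi).trans (sub_le_iff_le_add.mp (h i hi))

theorem Finset.abs_inf'_sub_inf'_le {ι α : Type*} [AddCommGroup α] [LinearOrder α]
    [IsOrderedAddMonoid α] {s : Finset ι} (hs : s.Nonempty) {f g : ι → α} {c : α}
    (h : ∀ i ∈ s, |f i - g i| ≤ c) : |s.inf' hs f - s.inf' hs g| ≤ c :=
  abs_sub_le_iff.mpr
    ⟨s.inf'_sub_inf'_le hs fun i hi => (abs_sub_le_iff.mp (h i hi)).1,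
      s.inf'_sub_inf'_le hs fun i hi => (abs_sub_le_iff.mp (h i hi)).2⟩

theorem abs_sum_mul_sub_sum_mul_le {ι : Type*} (s : Finset ι) {p ξ V W : ι → ℝ} {c : ℝ}
    (hp : ∀ i ∈ s, 0 ≤ p i) (h : ∀ i ∈ s, |V i - W i| ≤ c * ξ i) :
    |∑ i ∈ s, p i * V i - ∑ i ∈ s, p i * W i| ≤ c * ∑ i ∈ s, p i * ξ i := by
  rw [← sum_sub_distrib, mul_sum]
  refine (abs_sum_le_sum_abs _ _).trans (sum_le_sum fun i hi => ?_)
  rw [← mul_sub, abs_mul, abs_of_nonneg (hp i hi), mul_left_comm]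
  exact mul_le_mul_of_nonneg_left (h i hi) (hp i hi)

section WeightedContraction

variable {X : Type*} [Fintype X] {ξ : X → ℝ} {β : ℝ} {T : (X → ℝ) → (X → ℝ)}

/-- `T` is `β`-Lipschitz for the weighted sup-norm `‖V‖_ξ = max_x |V x| / ξ x`. -/
def WeightedLipschitzWith (ξ : X → ℝ) (β : ℝ) (T : (X → ℝ) → (X → ℝ)) : Prop :=
  ∀ V W : X → ℝ, ∀ c, 0 ≤ c → (∀ y, |V y - W y| ≤ c * ξ y) →
    ∀ x, |T V x - T W x| ≤ β * c * ξ x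

theorem WeightedLipschitzWith.contractingWith_rescale (hξ : ∀ x, 0 < ξ x) (hβ0 : 0 ≤ β)
    (hβ1 : β < 1) (hT : WeightedLipschitzWith ξ β T) :
    ContractingWith ⟨β, hβ0⟩ fun W => T (W * ξ) / ξ := by
  refine ⟨hβ1, LipschitzWith.of_dist_le_mul fun W₁ W₂ => ?_⟩
  have hd := dist_nonneg (x := W₁) (y := W₂)
  refine (dist_pi_le_iff (mul_nonneg hβ0 hd)).mpr fun x => ?_
  have hW : ∀ y, |(W₁ * ξ) y - (W₂ * ξ) y| ≤ dist W₁ W₂ * ξ y := fun y => by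
    rw [Pi.mul_apply, Pi.mul_apply, ← sub_mul, abs_mul, abs_of_pos (hξ y), ← Real.dist_eq]
    exact mul_le_mul_of_nonneg_right (dist_le_pi_dist W₁ W₂ y) (hξ y).le
  rw [Real.dist_eq, Pi.div_apply, Pi.div_apply, ← sub_div, abs_div, abs_of_pos (hξ x),
    div_le_iff₀ (hξ x)]
  exact hT _ _ _ hd hW x

theorem WeightedLipschitzWith.existsUnique_fixedPoint_tendsto_iterate (hξ : ∀ x, 0 < ξ x)
    (hβ0 : 0 ≤ β) (hβ1 : β < 1) (hT : WeightedLipschitzWith ξ β T) :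
    ∃! V : X → ℝ, T V = V ∧ ∀ V₀, Tendsto (fun k => T^[k] V₀) atTop (𝓝 V) := by
  set S : (X → ℝ) → (X → ℝ) := fun W => T (W * ξ) / ξ
  have hS := hT.contractingWith_rescale hξ hβ0 hβ1
  have hrescale : ∀ V : X → ℝ, V / ξ * ξ = V := fun V =>
    funext fun x => div_mul_cancel₀ _ (hξ x).ne'
  have hconj : Function.Semiconj (· * ξ) S T := fun W => hrescale _
  have hiter : ∀ k V₀, T^[k] V₀ = S^[k] (V₀ / ξ) * ξ := fun k V₀ => by
    rw [(hconj.iterate_right k).eq, hrescale]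
  have hconv : ∀ V₀, Tendsto (fun k => T^[k] V₀) atTop (𝓝 (hS.fixedPoint * ξ)) := fun V₀ => by
    simp only [hiter]
    exact ((continuous_mul_const ξ).tendsto _).comp (hS.tendsto_iterate_fixedPoint _)
  refine ⟨hS.fixedPoint * ξ, ⟨?_, hconv⟩, fun V ⟨hV, _⟩ => ?_⟩
  · rw [← hconj.eq]
    exact congrArg (· * ξ) hS.fixedPoint_isFixedPt
  · refine tendsto_nhds_unique ?_ (hconv V)
    simp only [Function.iterate_fixed hV, tendsto_const_nhds]

end WeightedContraction

section Bellman

variable {X U : Type*} [Fintype X]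

def bellmanOperator (Uadm : X → Finset U) (hUadm : ∀ x, (Uadm x).Nonempty)
    (P : X → U → X → ℝ) (D : X → U → ℝ) (B : X → ℝ) (V : X → ℝ) (x : X) : ℝ :=
  (Uadm x).inf' (hUadm x) fun u => max (B x) (D x u + ∑ x', P x u x' * V x')

theorem weightedLipschitzWith_bellmanOperator (Uadm : X → Finset U)
    (hUadm : ∀ x, (Uadm x).Nonempty) {P : X → U → X → ℝ} (hP : ∀ x u x', 0 ≤ P x u x')
    (D : X → U → ℝ) (B : X → ℝ) {ξ : X → ℝ} {β : ℝ}
    (hdisc : ∀ x u, ∑ x', P x u x' * ξ x' ≤ β * ξ x) :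
    WeightedLipschitzWith ξ β (bellmanOperator Uadm hUadm P D B) := by
  intro V W c hc hVW x
  refine (Uadm x).abs_inf'_sub_inf'_le (hUadm x) fun u _ => ?_
  calc |max (B x) (D x u + ∑ x', P x u x' * V x') - max (B x) (D x u + ∑ x', P x u x' * W x')|
      ≤ |∑ x', P x u x' * V x' - ∑ x', P x u x' * W x'| := by
        rw [max_comm (B x), max_comm (B x)]
        exact (abs_max_sub_max_le_abs _ _ _).trans_eq (by rw [add_sub_add_left_eq_sub])
    _ ≤ c * ∑ x', P x u x' * ξ x' :=
        abs_sum_mul_sub_sum_mul_le _ (fun x' _ => hP x u x') fun y _ => hVW y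
    _ ≤ β * c * ξ x := by
        rw [mul_assoc, mul_left_comm]
        exact mul_le_mul_of_nonneg_left (hdisc x u) hc

end Bellman

theorem bellman_operator_fixed_point_general
    {X U : Type*} [Fintype X]
    (Uadm : X → Finset U) (hUadm : ∀ x, (Uadm x).Nonempty)
    (P : X → U → X → ℝ) (hP : ∀ x u x', 0 ≤ P x u x')
    (D : X → U → ℝ) (B : X → ℝ)
    (ξ : X → ℝ) (hξ : ∀ x, 0 < ξ x) (β : ℝ) (hβ0 : 0 < β) (hβ1 : β < 1)
    (hdisc : ∀ x u, ∑ x', P x u x' * ξ x' ≤ β * ξ x)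
    (T : (X → ℝ) → (X → ℝ))
    (hT : ∀ V x, T V x =
      (Uadm x).inf' (hUadm x) (fun u => max (B x) (D x u + ∑ x', P x u x' * V x'))) :
    ∃! Vstar : X → ℝ, T Vstar = Vstar ∧
      ∀ V₀ : X → ℝ, ∀ x, Filter.Tendsto (fun k => T^[k] V₀ x) Filter.atTop (nhds (Vstar x)) := by
  obtain rfl : T = bellmanOperator Uadm hUadm P D B := funext fun V => funext (hT V)
  have hlip := weightedLipschitzWith_bellmanOperator Uadm hUadm hP D B hdisc
  simpa only [tendsto_pi_nhds] using
    hlip.existsUnique_fixedPoint_tendsto_iterate hξ hβ0.le hβ1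

/-- Under the weighted-discounting hypotheses, the max-projected Bellman operator has a
unique fixed point `V*` and value iteration converges to it from any initial `V₀`. -/
theorem bellman_operator_fixed_point
    {X U : Type*} [Fintype X] [Nonempty X] [Fintype U] [DecidableEq U]
    (Uadm : X → Finset U) (hUadm : ∀ x, (Uadm x).Nonempty)
    (P : X → U → X → ℝ) (hP : ∀ x u x', 0 ≤ P x u x')
    (D : X → U → ℝ) (B : X → ℝ)
    (ξ : X → ℝ) (hξ : ∀ x, 0 < ξ x) (β : ℝ) (hβ0 : 0 < β) (hβ1 : β < 1)
    (hdisc : ∀ x u, ∑ x', P x u x' * ξ x' ≤ β * ξ x)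
    (T : (X → ℝ) → (X → ℝ))
    (hT : ∀ V x, T V x =
      (Uadm x).inf' (hUadm x) (fun u => max (B x) (D x u + ∑ x', P x u x' * V x'))) :
    ∃! Vstar : X → ℝ, T Vstar = Vstar ∧
      ∀ V₀ : X → ℝ, ∀ x, Filter.Tendsto (fun k => T^[k] V₀ x) Filter.atTop (nhds (Vstar x)) :=
  bellman_operator_fixed_point_general Uadm hUadm P hP D B ξ hξ β hβ0 hβ1 hdisc T hT
end
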